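/- arXiv:2301.10031 — 2 statements merged into one kernel-verified Lean document; each statement's English description precedes it below -/
import Mathlib

section
/- Let G be a finite co-bipartite graph, with V(G) = A ∪ B where A and B are cliques. Then G has a path decomposition (P, β) of width equal to tw(G) such that A ⊆ β(p_1) and B ⊆ β(p_r), where p_1 and p_r are the two endpoints of the path P. -/
open SimpleGraph

/-- `(T, β)` is a tree decomposition of the graph `G`: `T` is a tree, every vertex of `G`
is in some bag, both endpoints of every edge of `G` lie in a common bag, and for every
vertex of `G` the set of nodes of `T` whose bag contains it induces a connected subtree. -/
def IsTreeDecomposition {V ι : Type} (G : SimpleGraph V) (T : SimpleGraph ι)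
    (β : ι → Set V) : Prop :=
  T.IsTree ∧
  (∀ v : V, ∃ x : ι, v ∈ β x) ∧
  (∀ ⦃u v : V⦄, G.Adj u v → ∃ x : ι, u ∈ β x ∧ v ∈ β x) ∧
  (∀ v : V, (T.induce {x : ι | v ∈ β x}).Connected)

/-- The width of a decomposition with bags `β`: the maximum of `|β x| - 1` over all nodes. -/
noncomputable def decompWidth {V ι : Type} (β : ι → Set V) : ℕ :=
  ⨆ x : ι, ((β x).ncard - 1)

/-- The treewidth of `G`: the minimum width of a tree decomposition of `G`. -/
noncomputable def treewidth {V : Type} (G : SimpleGraph V) : ℕ :=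
  sInf { k : ℕ | ∃ (ι : Type) (T : SimpleGraph ι) (β : ι → Set V),
    IsTreeDecomposition G T β ∧ decompWidth β = k }

/-- A path decomposition of `G` with bags `β p_1, …, β p_r`: every vertex is in some bag,
both endpoints of every edge lie in a common bag, and the bags containing a fixed vertex
form a contiguous interval. -/
def IsPathDecomposition {V : Type} (G : SimpleGraph V) (r : ℕ) (β : Fin r → Set V) : Prop :=
  (∀ v : V, ∃ x : Fin r, v ∈ β x) ∧
  (∀ ⦃u v : V⦄, G.Adj u v → ∃ x : Fin r, u ∈ β x ∧ v ∈ β x) ∧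
  (∀ (v : V) (i j k : Fin r), i ≤ j → j ≤ k → v ∈ β i → v ∈ β k → v ∈ β j)

/-- The pathwidth of `G`: the minimum width of a path decomposition of `G`. -/
noncomputable def pathwidth {V : Type} (G : SimpleGraph V) : ℕ :=
  sInf { k : ℕ | ∃ (r : ℕ) (β : Fin (r + 1) → Set V),
    IsPathDecomposition G (r + 1) β ∧ decompWidth β = k }

/-!
Take a tree decomposition `(T, β)` of minimum width. Subtrees of a tree have the Helly property,
so the cliques `A` and `B` lie in bags `β a` and `β b`. The bags along the `a`–`b` path of `T`
form a path decomposition: every vertex lies in `β a` or `β b`, and for an edge `uv` with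
`u ∈ β a`, `v ∈ β b` and `u, v ∈ β t`, the median of `a`, `b`, `t` lies on the path and its bag
contains both `u` and `v`. This path decomposition is no wider than `(T, β)`, and no narrower
than `tw G`, being a tree decomposition over a path graph.
-/

namespace SimpleGraph

variable {ι : Type*} {T : SimpleGraph ι}

lemma Walk.reachable_induce_of_support_subset {S : Set ι} {a b : ι} (p : T.Walk a b)
    (hp : ∀ x ∈ p.support, x ∈ S) (ha : a ∈ S) (hb : b ∈ S) :
    (T.induce S).Reachable ⟨a, ha⟩ ⟨b, hb⟩ :=
  (p.connected_induce_support.preconnected ⟨a, p.start_mem_support⟩ ⟨b, p.end_mem_support⟩).map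
    (induceHomOfLE T hp).toHom

lemma Preconnected.reachable_of_induce {S : Set ι} (hS : (T.induce S).Preconnected) {a b : ι}
    (ha : a ∈ S) (hb : b ∈ S) : T.Reachable a b :=
  (hS ⟨a, ha⟩ ⟨b, hb⟩).map (Embedding.induce S).toHom

lemma IsAcyclic.support_subset_of_preconnected_induce (hT : T.IsAcyclic) {S : Set ι}
    (hS : (T.induce S).Preconnected) {a b : ι} (ha : a ∈ S) (hb : b ∈ S) {p : T.Walk a b}
    (hp : p.IsPath) : ∀ x ∈ p.support, x ∈ S := by
  classical
  obtain ⟨w⟩ := hS ⟨a, ha⟩ ⟨b, hb⟩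
  let w' : T.Walk a b := w.map (Embedding.induce S).toHom
  have hpw : p = w'.bypass :=
    congrArg Subtype.val ((hT.subsingleton_path a b).elim ⟨p, hp⟩ w'.toPath)
  intro x hx
  rw [hpw] at hx
  obtain ⟨y, -, rfl⟩ := List.mem_map.mp (w.support_map _ ▸ w'.support_bypass_subset_support hx)
  exact y.2

lemma IsAcyclic.preconnected_induce_inter (hT : T.IsAcyclic) {S S' : Set ι}
    (hS : (T.induce S).Preconnected) (hS' : (T.induce S').Preconnected) :
    (T.induce (S ∩ S')).Preconnected := by
  rintro ⟨a, haS, haS'⟩ ⟨b, hbS, hbS'⟩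
  obtain ⟨p, hp⟩ := (hS.reachable_of_induce haS hbS).exists_isPath
  exact p.reachable_induce_of_support_subset (S := S ∩ S')
    (fun x hx => ⟨hT.support_subset_of_preconnected_induce hS haS hbS hp x hx,
      hT.support_subset_of_preconnected_induce hS' haS' hbS' hp x hx⟩) _ _

lemma IsAcyclic.exists_median (hT : T.IsAcyclic) {x y z : ι} {p : T.Walk x y}
    {q : T.Walk x z} (hp : p.IsPath) (hq : q.IsPath) (o : T.Walk y z) :
    ∃ m ∈ o.support, m ∈ p.support ∧ m ∈ q.support := by
  classical
  induction o with
  | nil => exact ⟨_, Walk.start_mem_support _, p.end_mem_support, q.end_mem_support⟩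
  | @cons y y' z hadj o ih =>
    by_cases hy : y ∈ q.support
    · exact ⟨y, Walk.start_mem_support _, p.end_mem_support, hy⟩
    have hy' : y' ∈ q.support → y' ∈ p.support := fun h =>
      hT.mem_support_of_ne_mem_support_of_adj_of_isPath hp (hq.takeUntil h) hadj
        fun h' => hy (q.support_takeUntil_subset_support h h')
    obtain ⟨m, hmo, hmp, hmq⟩ := ih ((p.concat hadj).bypass_isPath) hq
    refine ⟨m, List.mem_cons_of_mem _ hmo, ?_, hmq⟩
    have := (p.concat hadj).support_bypass_subset_support hmp
    rw [Walk.support_concat, List.mem_append, List.mem_singleton] at this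
    rcases this with h | rfl
    exacts [h, hy' hmq]

lemma IsAcyclic.inter_inter_nonempty (hT : T.IsAcyclic) {S₁ S₂ S₃ : Set ι}
    (h₁ : (T.induce S₁).Preconnected) (h₂ : (T.induce S₂).Preconnected)
    (h₃ : (T.induce S₃).Preconnected) (h₁₂ : (S₁ ∩ S₂).Nonempty) (h₁₃ : (S₁ ∩ S₃).Nonempty)
    (h₂₃ : (S₂ ∩ S₃).Nonempty) : (S₁ ∩ S₂ ∩ S₃).Nonempty := by
  obtain ⟨x, hx₁, hx₂⟩ := h₁₂
  obtain ⟨y, hy₁, hy₃⟩ := h₁₃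
  obtain ⟨z, hz₂, hz₃⟩ := h₂₃
  obtain ⟨p, hp⟩ := (h₁.reachable_of_induce hx₁ hy₁).exists_isPath
  obtain ⟨q, hq⟩ := (h₂.reachable_of_induce hx₂ hz₂).exists_isPath
  obtain ⟨o, ho⟩ := (h₃.reachable_of_induce hy₃ hz₃).exists_isPath
  obtain ⟨m, hmo, hmp, hmq⟩ := hT.exists_median hp hq o
  exact ⟨m, ⟨hT.support_subset_of_preconnected_induce h₁ hx₁ hy₁ hp m hmp,
    hT.support_subset_of_preconnected_induce h₂ hx₂ hz₂ hq m hmq⟩,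
    hT.support_subset_of_preconnected_induce h₃ hy₃ hz₃ ho m hmo⟩

theorem IsAcyclic.helly_theorem {α : Type*} (hT : T.IsAcyclic) {s : Finset α}
    (hs : s.Nonempty) {S : α → Set ι} (hS : ∀ a ∈ s, (T.induce (S a)).Preconnected)
    (hpair : ∀ a ∈ s, ∀ b ∈ s, (S a ∩ S b).Nonempty) : (⋂ a ∈ s, S a).Nonempty := by
  induction hs using Finset.Nonempty.cons_induction generalizing S with
  | singleton a => simpa using hpair a (by simp) a (by simp)
  | cons a s ha hs ih =>
    have ha' : a ∈ s.cons a ha := Finset.mem_cons_self a s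
    have hSa := hS a ha'
    have hpair' : ∀ b ∈ s, ∀ c ∈ s, (S b ∩ S c ∩ S a).Nonempty := fun b hb c hc =>
      have hb' : b ∈ s.cons a ha := Finset.mem_cons_of_mem hb
      have hc' : c ∈ s.cons a ha := Finset.mem_cons_of_mem hc
      hT.inter_inter_nonempty (hS b hb') (hS c hc') hSa (hpair b hb' c hc') (hpair b hb' a ha')
        (hpair c hc' a ha')
    -- the traces `S b ∩ S a` on the remaining sets are again pairwise intersecting subtrees
    obtain ⟨m, hm⟩ := ih (S := fun b => S b ∩ S a)
      (fun b hb => hT.preconnected_induce_inter (hS b (Finset.mem_cons_of_mem hb)) hSa)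
      (fun b hb c hc => (hpair' b hb c hc).mono fun _ hx => ⟨⟨hx.1.1, hx.2⟩, hx.1.2, hx.2⟩)
    simp only [Set.mem_iInter₂, Set.mem_inter_iff] at hm
    obtain ⟨b, hb⟩ := hs
    refine ⟨m, Set.mem_iInter₂.mpr fun c hc => ?_⟩
    rcases Finset.mem_cons.mp hc with rfl | hc
    exacts [(hm b hb).2, (hm c hc).1]

lemma IsAcyclic.getVert_mem_of_preconnected_induce (hT : T.IsAcyclic) {S : Set ι}
    (hS : (T.induce S).Preconnected) {a b : ι} {p : T.Walk a b} (hp : p.IsPath) {i j k : ℕ}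
    (hij : i ≤ j) (hjk : j ≤ k) (hi : p.getVert i ∈ S) (hk : p.getVert k ∈ S) :
    p.getVert j ∈ S := by
  have hk' : (p.drop i).getVert (k - i) ∈ S := by
    rwa [Walk.drop_getVert, Nat.add_sub_cancel' (hij.trans hjk)]
  have := hT.support_subset_of_preconnected_induce hS hi hk' ((hp.drop i).take (k - i)) _
    (((p.drop i).take (k - i)).getVert_mem_support (j - i))
  rwa [Walk.take_getVert, Walk.drop_getVert, min_eq_right (by omega), Nat.add_sub_cancel' hij]
    at this

lemma not_reachable_deleteEdges_pathGraph {n : ℕ} {i j : Fin n} (hij : i.val + 1 = j.val) :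
    ¬ ((pathGraph n).deleteEdges {s(i, j)}).Reachable i j := by
  rintro ⟨w⟩
  obtain ⟨d, -, hd₁, hd₂⟩ := w.exists_boundary_dart (Set.Iic i) (Set.mem_Iic.mpr le_rfl)
    (Set.mem_Iic.not.mpr (by rw [Fin.le_def]; omega))
  have hadj := d.adj
  simp only [Set.mem_Iic, not_le, Fin.le_def] at hd₁ hd₂
  rw [deleteEdges_adj, pathGraph_adj] at hadj
  obtain ⟨hstep | hstep, hne⟩ := hadj
  · have hfst : d.fst = i := Fin.ext (by omega)
    have hsnd : d.snd = j := Fin.ext (by omega)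
    exact hne (by rw [hfst, hsnd]; rfl)
  · omega

lemma pathGraph_isAcyclic (n : ℕ) : (pathGraph n).IsAcyclic := by
  refine isAcyclic_iff_forall_adj_isBridge.mpr fun u v huv => isBridge_iff.mpr ?_
  rcases pathGraph_adj.mp huv with h | h
  · exact not_reachable_deleteEdges_pathGraph h
  · rw [Sym2.eq_swap]
    exact fun hr => not_reachable_deleteEdges_pathGraph h hr.symm

lemma pathGraph_preconnected_induce {n : ℕ} {J : Set (Fin n)} (hJ : J.OrdConnected) :
    ((pathGraph n).induce J).Preconnected := by
  suffices h : ∀ (d : ℕ) (a b : Fin n) (ha : a ∈ J) (hb : b ∈ J), b.val = a.val + d →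
      ((pathGraph n).induce J).Reachable ⟨a, ha⟩ ⟨b, hb⟩ by
    rintro ⟨a, ha⟩ ⟨b, hb⟩
    rcases le_total a b with hab | hab
    · exact h _ a b ha hb (Nat.add_sub_of_le hab).symm
    · exact (h _ b a hb ha (Nat.add_sub_of_le hab).symm).symm
  intro d
  induction d with
  | zero => intro a b ha hb h; obtain rfl : a = b := Fin.ext h.symm; rfl
  | succ d ih =>
    intro a b ha hb h
    let c : Fin n := ⟨a.val + d, by omega⟩
    have hc : c ∈ J :=
      hJ.out ha hb ⟨Fin.le_def.mpr (by simp [c]), Fin.le_def.mpr (by simp [c]; omega)⟩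
    refine (ih a c ha hc rfl).trans (Adj.reachable ?_)
    simp only [comap_adj, Function.Embedding.coe_subtype, pathGraph_adj, c]
    omega

end SimpleGraph

section TreeDecomposition

variable {V ι : Type} {G : SimpleGraph V} {T : SimpleGraph ι} {β : ι → Set V}

lemma isTreeDecomposition_univ (G : SimpleGraph V) :
    IsTreeDecomposition G (⊥ : SimpleGraph Unit) fun _ => Set.univ := by
  refine ⟨.of_subsingleton, fun _ => ⟨(), trivial⟩, fun _ _ _ => ⟨(), trivial, trivial⟩,
    fun v => ?_⟩
  have : Nonempty {x : Unit | v ∈ (Set.univ : Set V)} := ⟨⟨(), trivial⟩⟩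
  exact .of_subsingleton

lemma exists_isTreeDecomposition_decompWidth_eq_treewidth (G : SimpleGraph V) :
    ∃ (ι : Type) (T : SimpleGraph ι) (β : ι → Set V),
      IsTreeDecomposition G T β ∧ decompWidth β = treewidth G := by
  have hne : {k : ℕ | ∃ (ι : Type) (T : SimpleGraph ι) (β : ι → Set V),
      IsTreeDecomposition G T β ∧ decompWidth β = k}.Nonempty :=
    ⟨_, Unit, ⊥, _, isTreeDecomposition_univ G, rfl⟩
  exact Nat.sInf_mem hne

lemma treewidth_le_decompWidth (htd : IsTreeDecomposition G T β) :
    treewidth G ≤ decompWidth β :=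
  Nat.sInf_le ⟨ι, T, β, htd, rfl⟩

lemma decompWidth_comp_le [Finite V] {κ : Type} (β : ι → Set V) (f : κ → ι) :
    decompWidth (β ∘ f) ≤ decompWidth β :=
  ciSup_le' fun k => le_ciSup (f := fun x => (β x).ncard - 1)
    ⟨Nat.card V, Set.forall_mem_range.mpr fun _ => (Nat.sub_le _ _).trans (Set.ncard_le_card _)⟩
    (f k)

lemma IsTreeDecomposition.exists_subset_bag_of_isClique (htd : IsTreeDecomposition G T β)
    {C : Set V} (hC : G.IsClique C) (hfin : C.Finite) : ∃ x, C ⊆ β x := by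
  obtain ⟨htree, hvert, hedge, hconn⟩ := htd
  rcases C.eq_empty_or_nonempty with rfl | hne
  · obtain ⟨x⟩ := htree.connected.nonempty
    exact ⟨x, Set.empty_subset _⟩
  have hpair : ∀ u ∈ hfin.toFinset, ∀ v ∈ hfin.toFinset,
      ({x | u ∈ β x} ∩ {x | v ∈ β x}).Nonempty := by
    intro u hu v hv
    rw [Set.Finite.mem_toFinset] at hu hv
    obtain rfl | huv := eq_or_ne u v
    · obtain ⟨x, hx⟩ := hvert u
      exact ⟨x, hx, hx⟩
    · exact hedge (hC hu hv huv)
  obtain ⟨x, hx⟩ := htree.isAcyclic.helly_theorem (hfin.toFinset_nonempty.mpr hne)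
    (fun v _ => (hconn v).preconnected) hpair
  exact ⟨x, fun v hv => Set.mem_iInter₂.mp hx v (hfin.mem_toFinset.mpr hv)⟩

lemma IsTreeDecomposition.exists_mem_support_of_adj (htd : IsTreeDecomposition G T β)
    {u v : V} (huv : G.Adj u v) {a b : ι} (hu : u ∈ β a) (hv : v ∈ β b) {P : T.Walk a b}
    (hP : P.IsPath) : ∃ x ∈ P.support, u ∈ β x ∧ v ∈ β x := by
  obtain ⟨t, hut, hvt⟩ := htd.2.2.1 huv
  have hTu := (htd.2.2.2 u).preconnected
  have hTv := (htd.2.2.2 v).preconnected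
  obtain ⟨p, hp⟩ := (hTu.reachable_of_induce hu hut).exists_isPath
  obtain ⟨q, hq⟩ := (hTv.reachable_of_induce hvt hv).exists_isPath
  obtain ⟨m, hmq, hmp, hmP⟩ := htd.1.isAcyclic.exists_median hp hP q
  exact ⟨m, hmP, htd.1.isAcyclic.support_subset_of_preconnected_induce hTu hu hut hp m hmp,
    htd.1.isAcyclic.support_subset_of_preconnected_induce hTv hvt hv hq m hmq⟩

lemma IsTreeDecomposition.isPathDecomposition_getVert (htd : IsTreeDecomposition G T β)
    {a b : ι} {P : T.Walk a b} (hP : P.IsPath) (hcover : ∀ v, v ∈ β a ∨ v ∈ β b) :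
    IsPathDecomposition G (P.length + 1) fun i => β (P.getVert i) := by
  have hindex : ∀ x ∈ P.support, ∃ i : Fin (P.length + 1), P.getVert i = x := fun x hx =>
    let ⟨n, hn, hle⟩ := Walk.mem_support_iff_exists_getVert.mp hx
    ⟨⟨n, by omega⟩, hn⟩
  have hvert : ∀ v, ∃ x ∈ P.support, v ∈ β x := fun v =>
    (hcover v).elim (⟨a, P.start_mem_support, ·⟩) (⟨b, P.end_mem_support, ·⟩)
  have hedge : ∀ ⦃u v⦄, G.Adj u v → ∃ x ∈ P.support, u ∈ β x ∧ v ∈ β x := by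
    intro u v huv
    rcases hcover u with hu | hu <;> rcases hcover v with hv | hv
    · exact ⟨a, P.start_mem_support, hu, hv⟩
    · exact htd.exists_mem_support_of_adj huv hu hv hP
    · obtain ⟨x, hx, hvx, hux⟩ := htd.exists_mem_support_of_adj huv.symm hv hu hP
      exact ⟨x, hx, hux, hvx⟩
    · exact ⟨b, P.end_mem_support, hu, hv⟩
  refine ⟨fun v => ?_, fun u v huv => ?_, fun v i j k hij hjk =>
    htd.1.isAcyclic.getVert_mem_of_preconnected_induce (htd.2.2.2 v).preconnected hP hij hjk⟩
  · obtain ⟨x, hx, hvx⟩ := hvert v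
    obtain ⟨i, rfl⟩ := hindex x hx
    exact ⟨i, hvx⟩
  · obtain ⟨x, hx, hux, hvx⟩ := hedge huv
    obtain ⟨i, rfl⟩ := hindex x hx
    exact ⟨i, hux, hvx⟩

lemma IsPathDecomposition.isTreeDecomposition {r : ℕ} {β : Fin (r + 1) → Set V}
    (hpd : IsPathDecomposition G (r + 1) β) : IsTreeDecomposition G (pathGraph (r + 1)) β := by
  refine ⟨⟨pathGraph_connected r, pathGraph_isAcyclic _⟩, hpd.1, hpd.2.1, fun v => ?_⟩
  obtain ⟨x, hx⟩ := hpd.1 v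
  exact (connected_iff _).mpr ⟨pathGraph_preconnected_induce
    ⟨fun i hi k hk j hj => hpd.2.2 v i j k hj.1 hj.2 hi hk⟩, ⟨⟨x, hx⟩⟩⟩

end TreeDecomposition

/-- If the vertex set of the finite graph `G` is the union of two cliques `A` and `B`
(i.e. `G` is co-bipartite), then `G` has a path decomposition of width equal to its
treewidth whose first bag contains `A` and whose last bag contains `B`. -/
theorem cobipartite_exists_pathDecomposition {V : Type} [Fintype V] (G : SimpleGraph V)
    (A B : Set V) (hUnion : A ∪ B = Set.univ)
    (hA : G.IsClique A) (hB : G.IsClique B) :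
    ∃ (r : ℕ) (β : Fin (r + 1) → Set V),
      IsPathDecomposition G (r + 1) β ∧
      decompWidth β = treewidth G ∧
      A ⊆ β 0 ∧ B ⊆ β (Fin.last r) := by
  obtain ⟨ι, T, β, htd, hwidth⟩ := exists_isTreeDecomposition_decompWidth_eq_treewidth G
  obtain ⟨a, hAa⟩ := htd.exists_subset_bag_of_isClique hA A.toFinite
  obtain ⟨b, hBb⟩ := htd.exists_subset_bag_of_isClique hB B.toFinite
  obtain ⟨P, hP⟩ := htd.1.connected.preconnected.exists_isPath a b
  have hpd := htd.isPathDecomposition_getVert hP fun v =>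
    (hUnion.symm ▸ Set.mem_univ v : v ∈ A ∪ B).imp (hAa ·) (hBb ·)
  refine ⟨P.length, _, hpd, le_antisymm ?_ (treewidth_le_decompWidth hpd.isTreeDecomposition),
    by simpa using hAa, by simpa using hBb⟩
  exact hwidth ▸ decompWidth_comp_le β fun i : Fin (P.length + 1) => P.getVert i
end

section
/- For every finite simple graph G, the pathwidth of G equals the vertex separation number of G: pw(G) = vsn(G). -/
open SimpleGraph

/-- The vertex separation number of `G`: the minimum over linear orderings of the vertices
of the maximum over positions `i` of the number of vertices placed after position `i`
having a neighbour at position at most `i`. -/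
noncomputable def vsn {V : Type} [Fintype V] (G : SimpleGraph V) : ℕ :=
  sInf { k : ℕ | ∃ f : V ≃ Fin (Fintype.card V),
    ∀ i : Fin (Fintype.card V),
      {w : V | i < f w ∧ ∃ u : V, G.Adj u w ∧ f u ≤ i}.ncard ≤ k }

/-!
An ordering `v_1, …, v_n` of the vertices yields a path decomposition whose `i`-th bag is `v_i`
together with the vertices separated at position `i`; the interval property holds because a
vertex `w` stays separated from its first neighbour onwards until its own position. Conversely,
order the vertices by the last bag of a path decomposition containing them: a vertex `w` after
`v_i` with a neighbour `u` at or before `v_i` meets `u` in a bag no later than the last bag of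
`v_i`, and its own last bag is no earlier, so `w` lies in the last bag of `v_i`, besides `v_i`.
-/

section Width

variable {V ι : Type} {β : ι → Set V}

lemma decompWidth_le [Nonempty ι] {k : ℕ} (h : ∀ x, (β x).ncard - 1 ≤ k) :
    decompWidth β ≤ k :=
  ciSup_le h

lemma ncard_sub_one_le_decompWidth [Finite ι] (x : ι) : (β x).ncard - 1 ≤ decompWidth β :=
  le_ciSup (f := fun x => (β x).ncard - 1) (Set.finite_range _).bddAbove x

end Width

section Pathwidth

variable {V : Type} {G : SimpleGraph V}

lemma isPathDecomposition_univ (G : SimpleGraph V) :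
    IsPathDecomposition G 1 fun _ => Set.univ :=
  ⟨fun v => ⟨0, Set.mem_univ v⟩, fun u v _ => ⟨0, Set.mem_univ u, Set.mem_univ v⟩,
    fun v _ _ _ _ _ _ _ => Set.mem_univ v⟩

lemma pathwidth_le_of_isPathDecomposition {n k : ℕ} {β : Fin n → Set V}
    (hβ : IsPathDecomposition G n β) (hn : n ≠ 0) (hk : ∀ i, (β i).ncard - 1 ≤ k) :
    pathwidth G ≤ k := by
  obtain ⟨r, rfl⟩ := Nat.exists_eq_succ_of_ne_zero hn
  exact (Nat.sInf_le ⟨r, β, hβ, rfl⟩ : pathwidth G ≤ _).trans (decompWidth_le hk)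

lemma pathwidth_le_card_sub_one (G : SimpleGraph V) : pathwidth G ≤ Nat.card V - 1 :=
  pathwidth_le_of_isPathDecomposition (isPathDecomposition_univ G) one_ne_zero
    fun _ => by rw [Set.ncard_univ]

lemma exists_isPathDecomposition_decompWidth_eq_pathwidth (G : SimpleGraph V) :
    ∃ (r : ℕ) (β : Fin (r + 1) → Set V),
      IsPathDecomposition G (r + 1) β ∧ decompWidth β = pathwidth G :=
  (Nat.sInf_mem ⟨_, 0, _, isPathDecomposition_univ G, rfl⟩ : pathwidth G ∈ _)

end Pathwidth

namespace SimpleGraph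

variable {V : Type} (G : SimpleGraph V)

def separatorAt {n : ℕ} (f : V → Fin n) (i : Fin n) : Set V :=
  {w | i < f w ∧ ∃ u, G.Adj u w ∧ f u ≤ i}

variable [Fintype V]

lemma vsn_le {k : ℕ} (f : V ≃ Fin (Fintype.card V))
    (hk : ∀ i, (G.separatorAt f i).ncard ≤ k) : vsn G ≤ k :=
  Nat.sInf_le ⟨f, hk⟩

lemma exists_separatorAt_ncard_le_vsn :
    ∃ f : V ≃ Fin (Fintype.card V), ∀ i, (G.separatorAt f i).ncard ≤ vsn G :=
  (Nat.sInf_mem ⟨_, Fintype.equivFin V, fun _ => Set.ncard_le_card _⟩ : vsn G ∈ _)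

end SimpleGraph

section OrderingToDecomposition

variable {V : Type} {G : SimpleGraph V} {n : ℕ}

lemma isPathDecomposition_insert_separatorAt (f : V ≃ Fin n) :
    IsPathDecomposition G n fun i => insert (f.symm i) (G.separatorAt f i) := by
  simp only [IsPathDecomposition, Set.mem_insert_iff, Equiv.eq_symm_apply]
  refine ⟨fun v => ⟨f v, .inl rfl⟩, fun u v huv => ?_, fun v i j k hij hjk hvi hvk => ?_⟩
  · rcases lt_trichotomy (f u) (f v) with h | h | h
    · exact ⟨f u, .inl rfl, .inr ⟨h, u, huv, le_rfl⟩⟩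
    · exact absurd (f.injective h) huv.ne
    · exact ⟨f v, .inr ⟨h, v, huv.symm, le_rfl⟩, .inl rfl⟩
  · have hkv : k ≤ f v := hvk.elim ge_of_eq fun h => h.1.le
    rcases (hjk.trans hkv).eq_or_lt with hjv | hjv
    · exact .inl hjv.symm
    · obtain ⟨-, u, huv, hui⟩ := hvi.resolve_left (hij.trans_lt hjv).ne'
      exact .inr ⟨hjv, u, huv, hui.trans hij⟩

lemma pathwidth_le_of_separatorAt_ncard_le [Fintype V] {k : ℕ} (f : V ≃ Fin (Fintype.card V))
    (hk : ∀ i, (G.separatorAt f i).ncard ≤ k) : pathwidth G ≤ k := by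
  rcases eq_or_ne (Fintype.card V) 0 with hV | hV
  · have := pathwidth_le_card_sub_one G
    rw [Nat.card_eq_fintype_card, hV] at this
    omega
  refine pathwidth_le_of_isPathDecomposition (isPathDecomposition_insert_separatorAt f) hV
    fun i => ?_
  have := Set.ncard_insert_le (f.symm i) (G.separatorAt f i)
  have := hk i
  omega

end OrderingToDecomposition

section DecompositionToOrdering

lemma Fintype.exists_equivFin_monotone_comp_symm {V α : Type} [Fintype V] [LinearOrder α]
    (g : V → α) : ∃ f : V ≃ Fin (Fintype.card V), Monotone (g ∘ f.symm) := by
  let e := Fintype.equivFin V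
  refine ⟨e.trans (Tuple.sort (g ∘ e.symm)).symm, ?_⟩
  simpa [Function.comp_def] using Tuple.monotone_sort (g ∘ e.symm)

variable {V : Type} {G : SimpleGraph V} {n : ℕ} {β : Fin n → Set V}

open scoped Classical in
noncomputable def IsPathDecomposition.lastBag (hβ : IsPathDecomposition G n β) (v : V) : Fin n :=
  (Finset.univ.filter fun i : Fin n => v ∈ β i).max' <|
    (hβ.1 v).elim fun x hx => ⟨x, by simpa using hx⟩

namespace IsPathDecomposition

variable (hβ : IsPathDecomposition G n β)

lemma mem_lastBag (v : V) : v ∈ β (hβ.lastBag v) := by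
  classical
  unfold lastBag
  exact (Finset.mem_filter.1 <|
    Finset.max'_mem (Finset.univ.filter fun i : Fin n => v ∈ β i) _).2

lemma le_lastBag {v : V} {i : Fin n} (hv : v ∈ β i) : i ≤ hβ.lastBag v := by
  classical
  unfold lastBag
  exact Finset.le_max' _ i (Finset.mem_filter.2 ⟨Finset.mem_univ i, hv⟩)

lemma separatorAt_subset_diff_lastBag {m : ℕ} {f : V ≃ Fin m}
    (hf : Monotone (hβ.lastBag ∘ f.symm)) (i : Fin m) :
    G.separatorAt f i ⊆ β (hβ.lastBag (f.symm i)) \ {f.symm i} := by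
  rintro w ⟨hiw, u, huw, hui⟩
  have hmono : ∀ {a b : V}, f a ≤ f b → hβ.lastBag a ≤ hβ.lastBag b := fun h => by
    simpa using hf h
  obtain ⟨s, hus, hws⟩ := hβ.2.1 huw
  have hs : s ≤ hβ.lastBag (f.symm i) :=
    (hβ.le_lastBag hus).trans (hmono (by simpa using hui))
  refine ⟨hβ.2.2 w _ _ _ hs (hmono (by simpa using hiw.le)) hws (hβ.mem_lastBag w), ?_⟩
  rintro rfl
  simp at hiw

end IsPathDecomposition

lemma vsn_le_of_isPathDecomposition [Fintype V] (hβ : IsPathDecomposition G n β) {k : ℕ}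
    (hk : ∀ i, (β i).ncard - 1 ≤ k) : vsn G ≤ k := by
  obtain ⟨f, hf⟩ := Fintype.exists_equivFin_monotone_comp_symm hβ.lastBag
  refine G.vsn_le f fun i => ?_
  calc (G.separatorAt f i).ncard
      ≤ (β (hβ.lastBag (f.symm i)) \ {f.symm i}).ncard :=
        Set.ncard_le_ncard (hβ.separatorAt_subset_diff_lastBag hf i) (Set.toFinite _)
    _ = (β (hβ.lastBag (f.symm i))).ncard - 1 :=
        Set.ncard_sdiff_singleton_of_mem (hβ.mem_lastBag _)
    _ ≤ k := hk _

end DecompositionToOrdering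

/-- Kinnersley's theorem: the pathwidth of every finite graph equals its vertex
separation number. -/
theorem pathwidth_eq_vsn {V : Type} [Fintype V] (G : SimpleGraph V) :
    pathwidth G = vsn G := by
  apply le_antisymm
  · obtain ⟨f, hf⟩ := G.exists_separatorAt_ncard_le_vsn
    exact pathwidth_le_of_separatorAt_ncard_le f hf
  · obtain ⟨r, β, hβ, hw⟩ := exists_isPathDecomposition_decompWidth_eq_pathwidth G
    exact vsn_le_of_isPathDecomposition hβ fun i => hw ▸ ncard_sub_one_le_decompWidth i
end
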